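/- Let Φ be a locally finite set of points in ℝ² that is (σ,ρ,ν)-ring regulated about the origin, with every point of Φ at distance greater than r₀ from the origin, let ℓ be a path-loss function as in the context and γ₀ > 0. Then for every x ∈ Φ, the rate satisfies R(x, Φ) ≥ log₂(1 + η(‖x‖)), where η(r) = (γ₀/ℓ(r) + σ_β + ρ_β r + ν_β r²)^{−1}. -/

import Mathlib

/-! By the layer cake formula for the counting measure, the tail interference
`I(s) = ∑_{‖w‖ > s} ℓ(‖w‖)` equals `∫₀^∞ #{w : ‖w‖ > s, ℓ(‖w‖) > u} du`. As `ℓ` is non-increasing,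
a finite part of such a superlevel set lies in a closed annulus `s < ‖z‖ ≤ R` all of whose radii
`(s, R]` satisfy `ℓ > u`; ring regulation therefore bounds its size by
`σ + ρ |{t > s : ℓ t > u}| + ν |{v > s² : ℓ √v > u}|`. Integrating over `u` and using the layer
cake formula on the half-lines once more gives `I(s) ≤ σ ℓ(s) + ρ ∫_s^∞ ℓ + ν ∫_{s²}^∞ ℓ(√v) dv`,
and the power-law bounds on `ℓ` turn this into `I(s) ≤ ℓ(s) (σ_β + ρ_β s + ν_β s²)`. Monotonicity
of `ℓ` and of `r ↦ σ_β + ρ_β r + ν_β r²` then gives `SrINR(w) ≥ η(‖x‖)` whenever `‖w‖ ≤ ‖x‖`. -/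

open MeasureTheory Set

noncomputable section

abbrev Plane : Type := EuclideanSpace ℝ (Fin 2)

/-- `Φ` is `(σ,ρ,ν)`-ring regulated about the origin. -/
def RingRegulated (Φ : Set Plane) (σ ρ ν : ℝ) : Prop :=
  ∀ r R : ℝ, 0 ≤ r → r < R →
    ((Φ ∩ {z : Plane | r < ‖z‖ ∧ ‖z‖ < R}).ncard : ℝ)
      ≤ σ + ρ * (R - r) + ν * (R ^ 2 - r ^ 2)

/-- The tail interference at the origin from points of `Φ` at distance greater than `r`. -/
def tailInterference (ℓ : ℝ → ℝ) (Φ : Set Plane) (r : ℝ) : ℝ :=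
  ∑' w : {w : Plane // w ∈ Φ ∧ r < ‖w‖}, ℓ ‖(w : Plane)‖

/-- The signal-to-residual-interference-plus-noise ratio of the transmitter at `x`
with respect to the receiver at the origin, under successive interference cancellation. -/
def SrINR (ℓ : ℝ → ℝ) (γ₀ : ℝ) (Φ : Set Plane) (x : Plane) : ℝ :=
  ℓ ‖x‖ / (tailInterference ℓ Φ ‖x‖ + γ₀)

/-- The deterministic lower bound `η(r)` on the SrINR at distance `r`. -/
def eta (ℓ : ℝ → ℝ) (γ₀ σβ ρβ νβ : ℝ) (r : ℝ) : ℝ :=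
  (γ₀ / ℓ r + σβ + ρβ * r + νβ * r ^ 2)⁻¹

/-- The rate of the link from `x` to the typical receiver at the origin:
the infimum over the transmitters `w ∈ Φ` with `‖w‖ ≤ ‖x‖` of `log₂(1 + SrINR(w,Φ))`. -/
def rate (ℓ : ℝ → ℝ) (γ₀ : ℝ) (Φ : Set Plane) (x : Plane) : ℝ :=
  sInf ((fun w => Real.logb 2 (1 + SrINR ℓ γ₀ Φ w)) '' {w ∈ Φ | ‖w‖ ≤ ‖x‖})

open scoped ENNReal

theorem tsum_ofReal_eq_lintegral_encard {α : Type*} (f : α → ℝ) (hf : 0 ≤ f) :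
    ∑' a, ENNReal.ofReal (f a) = ∫⁻ u in Ioi 0, ({a | u < f a}.encard : ℝ≥0∞) := by
  let _ : MeasurableSpace α := ⊤
  rw [← lintegral_count, lintegral_eq_lintegral_meas_lt _ (Filter.Eventually.of_forall hf)
    measurable_from_top.aemeasurable]
  simp only [Measure.count_apply MeasurableSpace.measurableSet_top]

theorem Set.encard_le_of_forall_finite_subset {α : Type*} {s : Set α} {c : ℝ≥0∞}
    (h : ∀ t ⊆ s, t.Finite → (t.encard : ℝ≥0∞) ≤ c) : (s.encard : ℝ≥0∞) ≤ c := by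
  rcases s.finite_or_infinite with hs | hs
  · exact h s subset_rfl hs
  · have hnat : ∀ n : ℕ, (n : ℝ≥0∞) ≤ c := fun n => by
      obtain ⟨t, hts, ht⟩ := exists_subset_encard_eq (k := n) (hs.encard_eq ▸ le_top)
      simpa [ht] using h t hts (finite_of_encard_eq_coe ht)
    have hc : c = ⊤ := by
      by_contra hc
      obtain ⟨n, hn⟩ := ENNReal.exists_nat_gt hc
      exact (hnat n).not_gt hn
    simp [hc]

theorem tsum_le_of_tsum_ofReal_le {α : Type*} {f : α → ℝ} {B : ℝ} (hf : 0 ≤ f) (hB : 0 ≤ B)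
    (h : ∑' a, ENNReal.ofReal (f a) ≤ ENNReal.ofReal B) : ∑' a, f a ≤ B := by
  by_cases hsum : Summable f
  · rwa [← ENNReal.ofReal_le_ofReal_iff hB, ENNReal.ofReal_tsum_of_nonneg hf hsum]
  · rwa [tsum_eq_zero_of_not_summable hsum]

theorem lintegral_Ioi_ofReal_rpow {a p : ℝ} (ha : 0 < a) (hp : p < -1) :
    ∫⁻ t in Ioi a, ENNReal.ofReal (t ^ p) = ENNReal.ofReal (a ^ (p + 1) / -(p + 1)) := by
  rw [← ofReal_integral_eq_lintegral_ofReal (integrableOn_Ioi_rpow_of_lt hp ha)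
    (ae_restrict_of_forall_mem measurableSet_Ioi fun t ht => Real.rpow_nonneg (ha.trans ht).le p),
    integral_Ioi_rpow_of_lt hp ha, neg_div, div_neg]

theorem lintegral_volume_superlevel_Ioi {g : ℝ → ℝ} {a : ℝ} (hg : AntitoneOn g (Ioi a))
    (hg0 : ∀ t ∈ Ioi a, 0 ≤ g t) :
    ∫⁻ u in Ioi 0, volume ({t | u < g t} ∩ Ioi a) = ∫⁻ t in Ioi a, ENNReal.ofReal (g t) := by
  rw [lintegral_eq_lintegral_meas_lt _ (ae_restrict_of_forall_mem measurableSet_Ioi hg0)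
    (aemeasurable_restrict_of_antitoneOn measurableSet_Ioi hg)]
  exact lintegral_congr fun u => (Measure.restrict_apply' measurableSet_Ioi).symm

namespace RingRegulated

variable {Φ : Set Plane} {σ ρ ν : ℝ}

theorem ncard_annulus_Ioc_le (hreg : RingRegulated Φ σ ρ ν)
    (hloc : ∀ R : ℝ, (Φ ∩ Metric.closedBall 0 R).Finite) {r R : ℝ} (hr : 0 ≤ r) (hrR : r ≤ R) :
    ((Φ ∩ {z : Plane | r < ‖z‖ ∧ ‖z‖ ≤ R}).ncard : ℝ) ≤ σ + ρ * (R - r) + ν * (R ^ 2 - r ^ 2) := by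
  have hcont : Continuous fun R' : ℝ => σ + ρ * (R' - r) + ν * (R' ^ 2 - r ^ 2) := by fun_prop
  refine ge_of_tendsto (hcont.continuousWithinAt (s := Ioi R) (x := R))
    (eventually_nhdsWithin_of_forall fun R' (hR' : R < R') => ?_)
  calc ((Φ ∩ {z : Plane | r < ‖z‖ ∧ ‖z‖ ≤ R}).ncard : ℝ)
      ≤ (Φ ∩ {z : Plane | r < ‖z‖ ∧ ‖z‖ < R'}).ncard := by
        gcongr
        exact (hloc R').subset fun z hz => ⟨hz.1, by simpa using hz.2.2.le⟩
    _ ≤ σ + ρ * (R' - r) + ν * (R' ^ 2 - r ^ 2) := hreg r R' hr (hrR.trans_lt hR')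

theorem encard_superlevel_le (hreg : RingRegulated Φ σ ρ ν)
    (hloc : ∀ R : ℝ, (Φ ∩ Metric.closedBall 0 R).Finite) {ℓ : ℝ → ℝ}
    (hℓ : AntitoneOn ℓ (Ici 0)) {s : ℝ} (hs : 0 ≤ s) (u : ℝ) :
    ({z ∈ Φ | s < ‖z‖ ∧ u < ℓ ‖z‖}.encard : ℝ≥0∞) ≤
      ENNReal.ofReal σ + ENNReal.ofReal ρ * volume ({t | u < ℓ t} ∩ Ioi s)
        + ENNReal.ofReal ν * volume ({v | u < ℓ √v} ∩ Ioi (s ^ 2)) := by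
  refine Set.encard_le_of_forall_finite_subset fun F hFK hF => ?_
  rcases F.eq_empty_or_nonempty with rfl | hne
  · simp
  obtain ⟨w, hwF, hwmax⟩ := F.exists_max_image (‖·‖) hF hne
  obtain ⟨-, hsw, huw⟩ := hFK hwF
  have hlevel : ∀ t, s < t → t ≤ ‖w‖ → u < ℓ t := fun t hst htw =>
    huw.trans_le (hℓ (hs.trans hst.le) (hs.trans hsw.le) htw)
  have hvol : ENNReal.ofReal (‖w‖ - s) ≤ volume ({t | u < ℓ t} ∩ Ioi s) :=
    Real.volume_Ioc.symm.trans_le (measure_mono fun t ht => ⟨hlevel t ht.1 ht.2, ht.1⟩)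
  have hvol₂ : ENNReal.ofReal (‖w‖ ^ 2 - s ^ 2) ≤ volume ({v | u < ℓ √v} ∩ Ioi (s ^ 2)) := by
    refine Real.volume_Ioc.symm.trans_le (measure_mono fun v hv => ⟨hlevel _ ?_ ?_, hv.1⟩)
    · exact (Real.lt_sqrt hs).2 hv.1
    · exact (Real.sqrt_le_left (hs.trans hsw.le)).2 hv.2
  have hFann : F ⊆ Φ ∩ {z : Plane | s < ‖z‖ ∧ ‖z‖ ≤ ‖w‖} := fun z hz =>
    ⟨(hFK hz).1, (hFK hz).2.1, hwmax z hz⟩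
  have hann_fin : (Φ ∩ {z : Plane | s < ‖z‖ ∧ ‖z‖ ≤ ‖w‖}).Finite :=
    (hloc ‖w‖).subset fun z hz => ⟨hz.1, by simpa using hz.2.2⟩
  calc (F.encard : ℝ≥0∞) ≤ (Φ ∩ {z : Plane | s < ‖z‖ ∧ ‖z‖ ≤ ‖w‖}).encard := by
        gcongr
    _ = ENNReal.ofReal ((Φ ∩ {z : Plane | s < ‖z‖ ∧ ‖z‖ ≤ ‖w‖}).ncard) := by
        rw [← hann_fin.cast_ncard_eq, ENNReal.ofReal_natCast, ENat.toENNReal_coe]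
    _ ≤ ENNReal.ofReal (σ + ρ * (‖w‖ - s) + ν * (‖w‖ ^ 2 - s ^ 2)) :=
        ENNReal.ofReal_le_ofReal (hreg.ncard_annulus_Ioc_le hloc hs hsw.le)
    _ ≤ ENNReal.ofReal σ + ENNReal.ofReal ρ * ENNReal.ofReal (‖w‖ - s)
          + ENNReal.ofReal ν * ENNReal.ofReal (‖w‖ ^ 2 - s ^ 2) := by
        rw [← ENNReal.ofReal_mul' (by linarith), ← ENNReal.ofReal_mul' (by nlinarith)]
        exact ENNReal.ofReal_add_le.trans (add_le_add_left ENNReal.ofReal_add_le _)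
    _ ≤ _ := by gcongr

end RingRegulated

section Tail

variable {Φ : Set Plane} {σ ρ ν : ℝ} {ℓ : ℝ → ℝ} {s : ℝ}

theorem tsum_ofReal_tail_le (hσ : 0 ≤ σ) (hloc : ∀ R : ℝ, (Φ ∩ Metric.closedBall 0 R).Finite)
    (hreg : RingRegulated Φ σ ρ ν) (hℓ0 : ∀ r, 0 ≤ ℓ r) (hℓ : AntitoneOn ℓ (Ici 0))
    (hs : 0 ≤ s) :
    ∑' w : {w : Plane // w ∈ Φ ∧ s < ‖w‖}, ENNReal.ofReal (ℓ ‖(w : Plane)‖) ≤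
      ENNReal.ofReal (σ * ℓ s) + ENNReal.ofReal ρ * (∫⁻ t in Ioi s, ENNReal.ofReal (ℓ t))
        + ENNReal.ofReal ν * ∫⁻ v in Ioi (s ^ 2), ENNReal.ofReal (ℓ √v) := by
  have hℓs : AntitoneOn ℓ (Ioi s) := hℓ.mono (Ioi_subset_Ici hs)
  have hℓsqrt : AntitoneOn (fun v => ℓ √v) (Ioi (s ^ 2)) := fun a _ b _ hab =>
    hℓ (Real.sqrt_nonneg a) (Real.sqrt_nonneg b) (Real.sqrt_le_sqrt hab)
  have hmeas : ∀ g : ℝ → ℝ, ∀ a : ℝ, Measurable fun u => volume ({t | u < g t} ∩ Ioi a) :=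
    fun g a => Antitone.measurable fun u u' huu' =>
      measure_mono fun t ht => ⟨huu'.trans_lt ht.1, ht.2⟩
  have hcount : ∀ u : ℝ, ({w : {w : Plane // w ∈ Φ ∧ s < ‖w‖} | u < ℓ ‖(w : Plane)‖}.encard
      : ℝ≥0∞) ≤ (Iio (ℓ s)).indicator (fun _ => ENNReal.ofReal σ) u
        + ENNReal.ofReal ρ * volume ({t | u < ℓ t} ∩ Ioi s)
        + ENNReal.ofReal ν * volume ({v | u < ℓ √v} ∩ Ioi (s ^ 2)) := by
    intro u
    rw [← Subtype.val_injective.encard_image]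
    by_cases hu : u < ℓ s
    · convert hreg.encard_superlevel_le hloc hℓ hs u using 3
      · ext z; simp only [mem_image, mem_ofPred_eq, Subtype.exists, exists_and_right,
          exists_eq_right]; tauto
      · simp [hu]
    · convert zero_le (α := ℝ≥0∞)
      simp only [ENat.toENNReal_eq_zero, encard_eq_zero, eq_empty_iff_forall_notMem]
      exact fun _ ⟨w, hw, _⟩ => hu (hw.trans_le (hℓ hs (hs.trans w.2.2.le) w.2.2.le))
  calc _ = ∫⁻ u in Ioi 0,
        ({w : {w : Plane // w ∈ Φ ∧ s < ‖w‖} | u < ℓ ‖(w : Plane)‖}.encard : ℝ≥0∞) :=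
        tsum_ofReal_eq_lintegral_encard _ fun w => hℓ0 _
    _ ≤ ∫⁻ u in Ioi 0, ((Iio (ℓ s)).indicator (fun _ => ENNReal.ofReal σ) u
        + ENNReal.ofReal ρ * volume ({t | u < ℓ t} ∩ Ioi s)
        + ENNReal.ofReal ν * volume ({v | u < ℓ √v} ∩ Ioi (s ^ 2))) := lintegral_mono hcount
    _ = ENNReal.ofReal (σ * ℓ s)
        + ENNReal.ofReal ρ * (∫⁻ u in Ioi 0, volume ({t | u < ℓ t} ∩ Ioi s))
        + ENNReal.ofReal ν * ∫⁻ u in Ioi 0, volume ({v | u < ℓ √v} ∩ Ioi (s ^ 2)) := by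
      rw [lintegral_add_right _ ((hmeas _ _).const_mul _),
        lintegral_add_right _ ((hmeas _ _).const_mul _),
        lintegral_indicator_const measurableSet_Iio, Measure.restrict_apply measurableSet_Iio,
        Iio_inter_Ioi, Real.volume_Ioo, sub_zero, ENNReal.ofReal_mul hσ,
        lintegral_const_mul _ (hmeas _ _), lintegral_const_mul _ (hmeas _ _)]
    _ = _ := by
      rw [lintegral_volume_superlevel_Ioi hℓs fun t _ => hℓ0 t,
        lintegral_volume_superlevel_Ioi hℓsqrt fun v _ => hℓ0 _]

theorem lintegral_Ioi_le_of_le_rpow {g : ℝ → ℝ} {a C p : ℝ} (ha : 0 < a) (hp : p < -1)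
    (hC : 0 ≤ C) (hg : ∀ t, a < t → g t ≤ C * t ^ p) :
    ∫⁻ t in Ioi a, ENNReal.ofReal (g t) ≤ ENNReal.ofReal (C * (a ^ (p + 1) / -(p + 1))) :=
  calc ∫⁻ t in Ioi a, ENNReal.ofReal (g t)
      ≤ ∫⁻ t in Ioi a, ENNReal.ofReal C * ENNReal.ofReal (t ^ p) :=
        setLIntegral_mono' measurableSet_Ioi fun t ht =>
          (ENNReal.ofReal_le_ofReal (hg t ht)).trans_eq (ENNReal.ofReal_mul hC)
    _ = ENNReal.ofReal (C * (a ^ (p + 1) / -(p + 1))) := by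
        rw [lintegral_const_mul' _ _ ENNReal.ofReal_ne_top, lintegral_Ioi_ofReal_rpow ha hp,
          ENNReal.ofReal_mul hC]

theorem tailInterference_le (hσ : 0 ≤ σ) (hρ : 0 ≤ ρ) (hν : 0 ≤ ν)
    (hloc : ∀ R : ℝ, (Φ ∩ Metric.closedBall 0 R).Finite) (hreg : RingRegulated Φ σ ρ ν)
    (hℓ0 : ∀ r, 0 ≤ ℓ r) (hℓ : AntitoneOn ℓ (Ici 0)) {C β : ℝ} (hs : 0 < s) (hβ : 2 < β)
    (hC : 0 ≤ C) (hub : ∀ t, s < t → ℓ t ≤ C * t ^ (-β)) :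
    tailInterference ℓ Φ s ≤
      σ * ℓ s + ρ * (C * (s ^ (1 - β) / (β - 1))) + ν * (C * (2 * s ^ (2 - β) / (β - 2))) := by
  have hnear := lintegral_Ioi_le_of_le_rpow hs (by linarith : -β < -1) hC hub
  rw [show -β + 1 = 1 - β by ring, show -(1 - β) = β - 1 by ring] at hnear
  have hub_sqrt : ∀ v, s ^ 2 < v → ℓ √v ≤ C * v ^ (-β / 2) := fun v hv => by
    have hsv : s < √v := (Real.lt_sqrt hs.le).2 hv
    convert hub _ hsv using 2
    rw [Real.sqrt_eq_rpow, ← Real.rpow_mul ((sq_nonneg s).trans hv.le)]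
    ring_nf
  have hfar := lintegral_Ioi_le_of_le_rpow (by positivity) (by linarith : -β / 2 < -1) hC hub_sqrt
  have hexp : (s ^ 2) ^ (-β / 2 + 1) / -(-β / 2 + 1) = 2 * s ^ (2 - β) / (β - 2) := by
    rw [← Real.rpow_natCast, ← Real.rpow_mul hs.le, show -(-β / 2 + 1) = (β - 2) / 2 by ring]
    field_simp
    ring_nf
  rw [hexp] at hfar
  have : 0 ≤ s ^ (1 - β) / (β - 1) := div_nonneg (by positivity) (by linarith)
  have : 0 ≤ 2 * s ^ (2 - β) / (β - 2) := div_nonneg (by positivity) (by linarith)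
  have := hℓ0 s
  refine tsum_le_of_tsum_ofReal_le (fun w => hℓ0 _) (by positivity)
    ((tsum_ofReal_tail_le hσ hloc hreg hℓ0 hℓ hs.le).trans ?_)
  calc _ ≤ ENNReal.ofReal (σ * ℓ s)
        + ENNReal.ofReal ρ * ENNReal.ofReal (C * (s ^ (1 - β) / (β - 1)))
        + ENNReal.ofReal ν * ENNReal.ofReal (C * (2 * s ^ (2 - β) / (β - 2))) := by
        gcongr
    _ = _ := by
        rw [← ENNReal.ofReal_mul hρ, ← ENNReal.ofReal_mul hν, ← ENNReal.ofReal_add (by positivity)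
          (by positivity), ← ENNReal.ofReal_add (by positivity) (by positivity)]

theorem tailInterference_le_mul (hσ : 0 ≤ σ) (hρ : 0 ≤ ρ) (hν : 0 ≤ ν)
    (hloc : ∀ R : ℝ, (Φ ∩ Metric.closedBall 0 R).Finite) (hreg : RingRegulated Φ σ ρ ν)
    (hℓ0 : ∀ r, 0 ≤ ℓ r) (hℓ : AntitoneOn ℓ (Ici 0)) {C C' β : ℝ} (hs : 0 < s) (hβ : 2 < β)
    (hC' : 0 < C') (hC : 0 ≤ C) (hlb : C' * s ^ (-β) ≤ ℓ s)
    (hub : ∀ t, s < t → ℓ t ≤ C * t ^ (-β)) :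
    tailInterference ℓ Φ s ≤
      ℓ s * (σ + C / C' * (ρ / (β - 1)) * s + C / C' * (2 * ν / (β - 2)) * s ^ 2) := by
  have hCq : C * s ^ (-β) ≤ C / C' * ℓ s := by
    rw [div_mul_eq_mul_div, le_div_iff₀ hC', mul_right_comm, mul_assoc]
    exact mul_le_mul_of_nonneg_left hlb hC
  have hpow₁ : s ^ (1 - β) = s * s ^ (-β) := by
    rw [sub_eq_add_neg, Real.rpow_add hs, Real.rpow_one]
  have hpow₂ : s ^ (2 - β) = s ^ 2 * s ^ (-β) := by
    rw [sub_eq_add_neg, Real.rpow_add hs, Real.rpow_two]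
  have : 0 ≤ ρ * s / (β - 1) := div_nonneg (by positivity) (by linarith)
  have : 0 ≤ 2 * ν * s ^ 2 / (β - 2) := div_nonneg (by positivity) (by linarith)
  calc tailInterference ℓ Φ s
      ≤ σ * ℓ s + ρ * (C * (s ^ (1 - β) / (β - 1))) + ν * (C * (2 * s ^ (2 - β) / (β - 2))) :=
        tailInterference_le hσ hρ hν hloc hreg hℓ0 hℓ hs hβ hC hub
    _ = σ * ℓ s + ρ * s / (β - 1) * (C * s ^ (-β)) + 2 * ν * s ^ 2 / (β - 2) * (C * s ^ (-β)) := by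
        rw [hpow₁, hpow₂]; ring
    _ ≤ σ * ℓ s + ρ * s / (β - 1) * (C / C' * ℓ s) + 2 * ν * s ^ 2 / (β - 2) * (C / C' * ℓ s) := by
        gcongr
    _ = _ := by ring

end Tail

theorem eta_pos {ℓ : ℝ → ℝ} {γ₀ σ ρβ νβ r : ℝ} (hγ₀ : 0 < γ₀) (hσ : 0 ≤ σ) (hρβ : 0 ≤ ρβ)
    (hνβ : 0 ≤ νβ) (hr : 0 ≤ r) (hℓr : 0 < ℓ r) : 0 < eta ℓ γ₀ σ ρβ νβ r := by
  unfold eta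
  positivity

theorem eta_le_SrINR {ℓ : ℝ → ℝ} {γ₀ σ ρβ νβ : ℝ} {Φ : Set Plane} {x w : Plane}
    (hℓ0 : ∀ r, 0 ≤ ℓ r) (hγ₀ : 0 < γ₀) (hσ : 0 ≤ σ) (hρβ : 0 ≤ ρβ) (hνβ : 0 ≤ νβ)
    (hℓx : 0 < ℓ ‖x‖) (hwx : ‖w‖ ≤ ‖x‖) (hℓwx : ℓ ‖x‖ ≤ ℓ ‖w‖)
    (htail : tailInterference ℓ Φ ‖w‖ ≤ ℓ ‖w‖ * (σ + ρβ * ‖w‖ + νβ * ‖w‖ ^ 2)) :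
    eta ℓ γ₀ σ ρβ νβ ‖x‖ ≤ SrINR ℓ γ₀ Φ w := by
  have hI : 0 ≤ tailInterference ℓ Φ ‖w‖ := tsum_nonneg fun _ => hℓ0 _
  have hD : 0 < γ₀ / ℓ ‖x‖ + σ + ρβ * ‖x‖ + νβ * ‖x‖ ^ 2 := by positivity
  have hnoise : γ₀ ≤ γ₀ / ℓ ‖x‖ * ℓ ‖w‖ := by
    rw [div_mul_eq_mul_div, le_div_iff₀ hℓx]
    gcongr
  rw [eta, SrINR, inv_eq_one_div, div_le_div_iff₀ hD (by positivity), one_mul]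
  calc tailInterference ℓ Φ ‖w‖ + γ₀
      ≤ ℓ ‖w‖ * (σ + ρβ * ‖w‖ + νβ * ‖w‖ ^ 2) + γ₀ / ℓ ‖x‖ * ℓ ‖w‖ := add_le_add htail hnoise
    _ ≤ ℓ ‖w‖ * (σ + ρβ * ‖x‖ + νβ * ‖x‖ ^ 2) + γ₀ / ℓ ‖x‖ * ℓ ‖w‖ := by
        have := hℓ0 ‖w‖
        gcongr
    _ = ℓ ‖w‖ * (γ₀ / ℓ ‖x‖ + σ + ρβ * ‖x‖ + νβ * ‖x‖ ^ 2) := by ring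

theorem stmt4_general (Φ : Set Plane) (σ ρ ν : ℝ)
    (hσ : 0 ≤ σ) (hρ : 0 ≤ ρ) (hν : 0 ≤ ν)
    (hloc : ∀ R : ℝ, (Φ ∩ Metric.closedBall 0 R).Finite)
    (hreg : RingRegulated Φ σ ρ ν)
    (ℓ : ℝ → ℝ) (hℓ0 : ∀ r, 0 ≤ ℓ r)
    (hℓanti : AntitoneOn ℓ (Set.Ici 0))
    (C C' r₀ β : ℝ) (hC' : 0 < C') (hCC' : C' ≤ C) (hr₀ : 0 < r₀) (hβ : 2 < β)
    (hℓlb : ∀ r, r₀ < r → C' * r ^ (-β) ≤ ℓ r)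
    (hℓub : ∀ r, r₀ < r → ℓ r ≤ C * r ^ (-β))
    (hΦr₀ : ∀ w ∈ Φ, r₀ < ‖w‖)
    (γ₀ : ℝ) (hγ₀ : 0 < γ₀) :
    ∀ x ∈ Φ,
      Real.logb 2
          (1 + eta ℓ γ₀ σ ((C / C') * (ρ / (β - 1))) ((C / C') * (2 * ν / (β - 2))) ‖x‖)
        ≤ rate ℓ γ₀ Φ x := by
  intro x hx
  have hC : 0 ≤ C := hC'.le.trans hCC'
  have hρβ : 0 ≤ C / C' * (ρ / (β - 1)) := by
    have : 0 < β - 1 := by linarith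
    positivity
  have hνβ : 0 ≤ C / C' * (2 * ν / (β - 2)) := by
    have : 0 < β - 2 := by linarith
    positivity
  have hℓpos : ∀ w ∈ Φ, 0 < ℓ ‖w‖ := fun w hw =>
    (mul_pos hC' (Real.rpow_pos_of_pos (hr₀.trans (hΦr₀ w hw)) _)).trans_le (hℓlb _ (hΦr₀ w hw))
  have hη := eta_pos (ℓ := ℓ) hγ₀ hσ hρβ hνβ (norm_nonneg x) (hℓpos x hx)
  refine le_csInf ⟨_, mem_image_of_mem _ ⟨hx, le_rfl⟩⟩ ?_
  rintro _ ⟨w, ⟨hw, hwx⟩, rfl⟩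
  have hw₀ := hΦr₀ w hw
  have htail := tailInterference_le_mul hσ hρ hν hloc hreg hℓ0 hℓanti (hr₀.trans hw₀) hβ hC' hC
    (hℓlb _ hw₀) fun t ht => hℓub t (hw₀.trans ht)
  have hSrINR := eta_le_SrINR hℓ0 hγ₀ hσ hρβ hνβ (hℓpos x hx) hwx
    (hℓanti (norm_nonneg w) (norm_nonneg x) hwx) htail
  exact Real.logb_le_logb_of_le one_lt_two (by linarith) (by linarith)

theorem stmt4 (Φ : Set Plane) (σ ρ ν : ℝ)
    (hσ : 0 ≤ σ) (hρ : 0 ≤ ρ) (hν : 0 ≤ ν)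
    (hloc : ∀ R : ℝ, (Φ ∩ Metric.closedBall 0 R).Finite)
    (hreg : RingRegulated Φ σ ρ ν)
    (ℓ : ℝ → ℝ) (hℓ0 : ∀ r, 0 ≤ ℓ r)
    (hℓanti : AntitoneOn ℓ (Set.Ici 0))
    (hℓbdd : BddAbove (ℓ '' Set.Ici 0))
    (C C' r₀ β : ℝ) (hC' : 0 < C') (hCC' : C' ≤ C) (hr₀ : 0 < r₀) (hβ : 2 < β)
    (hℓlb : ∀ r, r₀ < r → C' * r ^ (-β) ≤ ℓ r)
    (hℓub : ∀ r, r₀ < r → ℓ r ≤ C * r ^ (-β))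
    (hΦr₀ : ∀ w ∈ Φ, r₀ < ‖w‖)
    (γ₀ : ℝ) (hγ₀ : 0 < γ₀) :
    ∀ x ∈ Φ,
      Real.logb 2
          (1 + eta ℓ γ₀ σ ((C / C') * (ρ / (β - 1))) ((C / C') * (2 * ν / (β - 2))) ‖x‖)
        ≤ rate ℓ γ₀ Φ x :=
  stmt4_general Φ σ ρ ν hσ hρ hν hloc hreg ℓ hℓ0 hℓanti C C' r₀ β hC' hCC' hr₀ hβ hℓlb hℓub hΦr₀ γ₀
    hγ₀
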